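/- arXiv:1609.05621 — 6 statements merged into one kernel-verified Lean document; each statement's English description precedes it below -/
import Mathlib

section
/- For two EL atoms C and D, C is subsumed by D if and only if either C = D is a concept name, or C = ∃r.C' and D = ∃r.D' for the same role r with C' subsumed by D'. -/
inductive EL (N R : Type) : Type where
  | name : N → EL N R
  | top  : EL N R
  | conj : EL N R → EL N R → EL N R
  | ex   : R → EL N R → EL N R

structure Interp (N R : Type) where
  dom : Type
  nonempty : Nonempty dom
  cname : N → Set dom
  role : R → Set (dom × dom)

def Interp.sem {N R : Type} (I : Interp N R) : EL N R → Set I.dom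
  | .name A => I.cname A
  | .top => Set.univ
  | .conj C D => I.sem C ∩ I.sem D
  | .ex r C => {x | ∃ y, (x, y) ∈ I.role r ∧ y ∈ I.sem C}

/-- Semantic subsumption: `C ⊑ D` iff `C^I ⊆ D^I` for every interpretation `I`. -/
def Subsume {N R : Type} (C D : EL N R) : Prop :=
  ∀ I : Interp N R, I.sem C ⊆ I.sem D

/-- An atom is a concept name or an existential restriction. -/
def IsAtomEL {N R : Type} : EL N R → Prop
  | .name _ => True
  | .ex _ _ => True
  | _ => False

/-- Top-level atoms of a concept term. -/
def tla {N R : Type} : EL N R → List (EL N R)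
  | .conj C D => tla C ++ tla D
  | .top => []
  | .name A => [EL.name A]
  | .ex r C => [EL.ex r C]

/-- Conjunction of a nonempty list of terms `C :: Cs` (no extra ⊤ conjunct). -/
def conjs {N R : Type} : EL N R → List (EL N R) → EL N R
  | C, [] => C
  | C, D :: Ds => .conj C (conjs D Ds)

/-- Conjunction of a list of terms; the empty conjunction is ⊤. -/
def conjList {N R : Type} : List (EL N R) → EL N R
  | [] => .top
  | C :: Cs => conjs C Cs

/-- Symbol count: each concept name (and ⊤) is one symbol, each `∃r.` is one symbol. -/
def sizeEL {N R : Type} : EL N R → ℕ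
  | .name _ => 1
  | .top => 1
  | .conj C D => sizeEL C + sizeEL D + 1
  | .ex _ C => sizeEL C + 1

/-- Groundness: no occurrence of a variable (names are `V ⊕ K`, variables on the left). -/
def isGround {V K R : Type} : EL (V ⊕ K) R → Prop
  | .name (Sum.inl _) => False
  | .name (Sum.inr _) => True
  | .top => True
  | .conj C D => isGround C ∧ isGround D
  | .ex _ C => isGround C

/-- Application of a substitution `σ : V → EL (V ⊕ K) R` to a concept term. -/
def applySub {V K R : Type} (σ : V → EL (V ⊕ K) R) : EL (V ⊕ K) R → EL (V ⊕ K) R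
  | .name (Sum.inl X) => σ X
  | .name (Sum.inr A) => .name (Sum.inr A)
  | .top => .top
  | .conj C D => .conj (applySub σ C) (applySub σ D)
  | .ex r C => .ex r (applySub σ C)

/-- The variable `Y` occurs in the concept term. -/
def occursVar {V K R : Type} (Y : V) : EL (V ⊕ K) R → Prop
  | .name (Sum.inl X) => X = Y
  | .name (Sum.inr _) => False
  | .top => False
  | .conj C D => occursVar Y C ∨ occursVar Y D
  | .ex _ C => occursVar Y C

/-!
Use the canonical interpretation whose elements are concept terms, where `E ∈ A` iff `A` is a
top-level atom of `E` and `E r F` iff `∃r.F` is one. Every term belongs to its own extension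
there, so if `C ⊑ D` for atoms `C`, `D`, then `C` is `A` when `D = A`, and `C` is some `∃r.C'`
when `D = ∃r.D'`. In the last case, given `x ∈ C'^I`, extend `I` by a fresh root whose only
successor is an `r`-edge to `x`: the root lies in `∃r.C'`, hence in `∃r.D'`, so `x ∈ D'^I`.
-/

section

variable {N R : Type}

theorem Subsume.refl (C : EL N R) : Subsume C C :=
  fun _ _ h => h

def canonicalInterp (N R : Type) : Interp N R where
  dom := EL N R
  nonempty := ⟨.top⟩
  cname A := {E | .name A ∈ tla E}
  role r := {p | .ex r p.2 ∈ tla p.1}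

theorem mem_sem_canonicalInterp_of_tla_subset (C : EL N R) {E : EL N R} (h : tla C ⊆ tla E) :
    E ∈ (canonicalInterp N R).sem C := by
  induction C generalizing E with
  | name A => exact h (List.mem_singleton_self _)
  | top => trivial
  | conj C D ihC ihD =>
    exact ⟨ihC fun _ ha => h (List.mem_append_left _ ha),
      ihD fun _ ha => h (List.mem_append_right _ ha)⟩
  | ex r C ih => exact ⟨C, h (List.mem_singleton_self _), ih (List.Subset.refl _)⟩

theorem mem_sem_canonicalInterp_self (C : EL N R) : C ∈ (canonicalInterp N R).sem C :=
  mem_sem_canonicalInterp_of_tla_subset C (List.Subset.refl _)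

theorem Subsume.name_mem_tla {C : EL N R} {A : N} (h : Subsume C (.name A)) :
    .name A ∈ tla C :=
  h _ (mem_sem_canonicalInterp_self C)

theorem Subsume.exists_ex_mem_tla {C D : EL N R} {r : R} (h : Subsume C (.ex r D)) :
    ∃ C', .ex r C' ∈ tla C := by
  obtain ⟨C', hC', -⟩ := h _ (mem_sem_canonicalInterp_self C)
  exact ⟨C', hC'⟩

theorem IsAtomEL.tla_eq {C : EL N R} (hC : IsAtomEL C) : tla C = [C] := by
  cases C <;> first | rfl | exact hC.elim

def Interp.addRoot (I : Interp N R) (r : R) (x : I.dom) : Interp N R where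
  dom := Option I.dom
  nonempty := ⟨none⟩
  cname A := some '' I.cname A
  role s := Prod.map some some '' I.role s ∪ {p | s = r ∧ p = (none, some x)}

theorem some_mem_sem_addRoot_iff (I : Interp N R) (r : R) (x : I.dom) (E : EL N R)
    (a : I.dom) : some a ∈ (I.addRoot r x).sem E ↔ a ∈ I.sem E := by
  induction E generalizing a with
  | name A => exact Option.some_injective _ |>.mem_set_image
  | top => exact Iff.rfl
  | conj C D ihC ihD => exact (ihC a).and (ihD a)
  | ex s C ih =>
    constructor
    · rintro ⟨y, ⟨⟨_, b⟩, hab, hp⟩ | ⟨-, hp⟩, hy⟩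
      · cases hp
        exact ⟨b, hab, (ih b).1 hy⟩
      · cases hp
    · rintro ⟨b, hab, hb⟩
      exact ⟨some b, Or.inl ⟨(a, b), hab, rfl⟩, (ih b).2 hb⟩

theorem subsume_ex_ex_iff {r : R} {C D : EL N R} :
    Subsume (.ex r C) (.ex r D) ↔ Subsume C D := by
  constructor
  · intro h I x hx
    have hroot : none ∈ (I.addRoot r x).sem (.ex r C) :=
      ⟨some x, Or.inr ⟨rfl, rfl⟩, (some_mem_sem_addRoot_iff I r x C x).2 hx⟩
    obtain ⟨y, ⟨_, -, hp⟩ | ⟨-, hp⟩, hy⟩ := h _ hroot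
    · cases hp
    · cases hp
      exact (some_mem_sem_addRoot_iff I r x D x).1 hy
  · rintro h I x ⟨y, hxy, hy⟩
    exact ⟨y, hxy, h I hy⟩

end

theorem stmt0 {N R : Type} (C D : EL N R) (hC : IsAtomEL C) (hD : IsAtomEL D) :
    Subsume C D ↔
      ((∃ A : N, C = EL.name A ∧ D = EL.name A) ∨
        ∃ (r : R) (C' D' : EL N R), C = EL.ex r C' ∧ D = EL.ex r D' ∧ Subsume C' D') := by
  constructor
  · intro h
    cases D with
    | name A =>
      have hA : EL.name A = C := by simpa [hC.tla_eq] using h.name_mem_tla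
      exact Or.inl ⟨A, hA.symm, rfl⟩
    | ex r D' =>
      obtain ⟨C', hC'⟩ := h.exists_ex_mem_tla
      obtain rfl : C = EL.ex r C' := by simpa [hC.tla_eq, eq_comm] using hC'
      exact Or.inr ⟨r, C', D', rfl, rfl, subsume_ex_ex_iff.1 h⟩
    | top | conj _ _ => exact hD.elim
  · rintro (⟨A, rfl, rfl⟩ | ⟨r, C', D', rfl, rfl, h⟩)
    · exact Subsume.refl _
    · exact subsume_ex_ex_iff.2 h
end

section
/- For two EL concept terms C and D, C ⊑ D if and only if for every top-level atom D' of D there exists a top-level atom C' of C such that C' ⊑ D'. -/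
/-- The canonical interpretation: domain is the set of all concept terms. -/
def canon (N R : Type) : Interp N R where
  dom := EL N R
  nonempty := ⟨.top⟩
  cname A := {E | EL.name A ∈ tla E}
  role r := {p | EL.ex r p.2 ∈ tla p.1}

lemma mem_sem_iff_tla {N R : Type} (I : Interp N R) (E : EL N R) (x : I.dom) :
    x ∈ I.sem E ↔ ∀ A ∈ tla E, x ∈ I.sem A := by
  induction E with
  | name A => simp [tla, Interp.sem]
  | top => simp [tla, Interp.sem]
  | conj C D ihC ihD =>
      simp only [tla, List.mem_append]
      constructor
      · rintro ⟨h1, h2⟩ A (hA | hA)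
        · exact (ihC).mp h1 A hA
        · exact (ihD).mp h2 A hA
      · intro h
        exact ⟨(ihC).mpr fun A hA => h A (Or.inl hA),
               (ihD).mpr fun A hA => h A (Or.inr hA)⟩
  | ex r C _ => simp [tla]

lemma size_le_of_mem_tla {N R : Type} {A E : EL N R} (h : A ∈ tla E) :
    sizeEL A ≤ sizeEL E := by
  induction E with
  | name B => simp [tla] at h; subst h; simp
  | top => simp [tla] at h
  | conj C D ihC ihD =>
      simp only [tla, List.mem_append] at h
      rcases h with h | h
      · exact le_trans (ihC h) (by simp [sizeEL]; omega)
      · exact le_trans (ihD h) (by simp [sizeEL]; omega)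
  | ex r C _ => simp [tla] at h; subst h; simp

lemma canon_self {N R : Type} : ∀ E : EL N R, E ∈ (canon N R).sem E := by
  have key : ∀ n : ℕ, ∀ E : EL N R, sizeEL E ≤ n → E ∈ (canon N R).sem E := by
    intro n
    induction n with
    | zero => intro E hE; cases E <;> simp [sizeEL] at hE
    | succ n ih =>
        intro E hE
        refine (mem_sem_iff_tla (canon N R) E E).mpr ?_
        intro A hA
        cases A with
        | name B => exact hA
        | top => simp [Interp.sem, canon]; trivial
        | conj _ _ =>
            exfalso
            have : ∀ A' ∈ tla E, IsAtomEL A' := by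
              clear hA hE
              induction E with
              | name B => simp [tla, IsAtomEL]
              | top => simp [tla]
              | conj C D ihC ihD =>
                  simp only [tla, List.mem_append]
                  rintro A' (h | h)
                  · exact ihC A' h
                  · exact ihD A' h
              | ex r C _ => simp [tla, IsAtomEL]
            exact this _ hA
        | ex r F =>
            refine ⟨F, hA, ?_⟩
            have hF : sizeEL F < sizeEL E := by
              have := size_le_of_mem_tla hA
              simp [sizeEL] at this
              omega
            exact ih F (by omega)
  intro E
  exact key (sizeEL E) E le_rfl

lemma canon_complete {N R : Type} {E G : EL N R}
    (h : E ∈ (canon N R).sem G) : Subsume E G := by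
  induction G generalizing E with
  | name A =>
      intro J x hx
      have hmem : EL.name A ∈ tla E := h
      exact (mem_sem_iff_tla J E x).mp hx _ hmem
  | top => intro J x _; trivial
  | conj G₁ G₂ ih₁ ih₂ =>
      intro J x hx
      exact ⟨ih₁ h.1 J hx, ih₂ h.2 J hx⟩
  | ex r G₂ ih =>
      obtain ⟨F, hF, hsem⟩ := h
      have hsub : Subsume F G₂ := ih hsem
      intro J x hx
      have : x ∈ J.sem (EL.ex r F) := (mem_sem_iff_tla J E x).mp hx _ hF
      obtain ⟨y, hy, hyF⟩ := this
      exact ⟨y, hy, hsub J hyF⟩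

theorem stmt1 {N R : Type} (C D : EL N R) :
    Subsume C D ↔ ∀ D' ∈ tla D, ∃ C' ∈ tla C, Subsume C' D' := by
  constructor
  · intro h D' hD'
    have hC : C ∈ (canon N R).sem C := canon_self C
    have hCD : C ∈ (canon N R).sem D := h _ hC
    have hCD' : C ∈ (canon N R).sem D' := (mem_sem_iff_tla (canon N R) D C).mp hCD D' hD'
    cases hshape : D' with
    | name A =>
        subst hshape
        refine ⟨EL.name A, hCD', fun J x hx => hx⟩
    | top =>
        subst hshape
        refine ⟨EL.top, ?_, ?_⟩
        · exfalso
          -- top is never in tla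
          have : ∀ E : EL N R, EL.top ∉ tla E := by
            intro E
            induction E with
            | name B => simp [tla]
            | top => simp [tla]
            | conj _ _ ih1 ih2 => simp [tla]; exact ⟨ih1, ih2⟩
            | ex _ _ _ => simp [tla]
          exact absurd hD' (this D)
        · intro J x _; trivial
    | conj _ _ =>
        exfalso
        have : ∀ E : EL N R, ∀ A ∈ tla E, IsAtomEL A := by
          intro E
          induction E with
          | name B => simp [tla, IsAtomEL]
          | top => simp [tla]
          | conj _ _ ih1 ih2 =>
              simp only [tla, List.mem_append]
              rintro A (hA | hA)
              · exact ih1 A hA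
              · exact ih2 A hA
          | ex _ _ _ => simp [tla, IsAtomEL]
        have := this D D' hD'
        rw [hshape] at this
        exact this
    | ex r D₂ =>
        subst hshape
        obtain ⟨F, hF, hsem⟩ := hCD'
        refine ⟨EL.ex r F, hF, ?_⟩
        have hsub : Subsume F D₂ := canon_complete hsem
        intro J x hx
        obtain ⟨y, hy, hyF⟩ := hx
        exact ⟨y, hy, hsub J hyF⟩
  · intro h I x hx
    rw [mem_sem_iff_tla]
    intro D' hD'
    obtain ⟨C', hC', hsub⟩ := h D' hD'
    exact hsub I ((mem_sem_iff_tla I C x).mp hx C' hC')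
end

section
/- For two EL concept terms C and D, C is not subsumed by D if and only if there is a top-level atom D' of D such that every top-level atom C' of C satisfies C' ⋢ D'. -/
/-!
Evaluate in the canonical interpretation whose elements are the concept terms themselves: `E` is
in `A` when `A` is a top-level atom of `E`, and `(E, F)` is in `r` when `∃r.F` is one. In it a term
`E` belongs to `D` exactly when `E ⊑ D`. So if `C ⊑ D'` for an atom `D'`, then `C` belongs to `D'`
there, and for `D' = ∃r.F` this produces a top-level atom `∃r.G` of `C` with `G ⊑ F`.
-/

namespace EL

variable {N R : Type}

lemma mem_sem_iff_forall_tla (I : Interp N R) (E : EL N R) (x : I.dom) :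
    x ∈ I.sem E ↔ ∀ a ∈ tla E, x ∈ I.sem a := by
  induction E with
  | name A => simp [tla, Interp.sem]
  | top => simp [tla, Interp.sem]
  | conj C D ihC ihD =>
      simp only [tla, List.mem_append, Interp.sem, Set.mem_inter_iff, ihC, ihD]
      exact ⟨fun ⟨hC, hD⟩ a ha => ha.elim (hC a) (hD a),
        fun h => ⟨fun a ha => h a (.inl ha), fun a ha => h a (.inr ha)⟩⟩
  | ex r C => simp [tla]

lemma isAtomEL_of_mem_tla {E a : EL N R} (h : a ∈ tla E) : IsAtomEL a := by
  induction E with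
  | name A => simp only [tla, List.mem_singleton] at h; subst h; trivial
  | top => simp [tla] at h
  | conj C D ihC ihD => exact (List.mem_append.1 h).elim ihC ihD
  | ex r C => simp only [tla, List.mem_singleton] at h; subst h; trivial

lemma subsume_refl (C : EL N R) : Subsume C C :=
  fun _ _ hx => hx

lemma subsume_trans {C D E : EL N R} (h₁ : Subsume C D) (h₂ : Subsume D E) : Subsume C E :=
  fun I _ hx => h₂ I (h₁ I hx)

lemma subsume_of_mem_tla {E a : EL N R} (h : a ∈ tla E) : Subsume E a :=
  fun I x hx => (mem_sem_iff_forall_tla I E x).1 hx a h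

lemma subsume_of_forall_tla {C D : EL N R} (h : ∀ a ∈ tla D, Subsume C a) : Subsume C D :=
  fun I x hx => (mem_sem_iff_forall_tla I D x).2 fun a ha => h a ha I hx

lemma subsume_ex {C D : EL N R} (r : R) (h : Subsume C D) : Subsume (.ex r C) (.ex r D) := by
  rintro I x ⟨y, hxy, hy⟩
  exact ⟨y, hxy, h I hy⟩

def canonicalInterp (N R : Type) : Interp N R where
  dom := EL N R
  nonempty := ⟨.top⟩
  cname A := {E | .name A ∈ tla E}
  role r := {p | .ex r p.2 ∈ tla p.1}

lemma mem_canonicalInterp_sem_of_tla_subset {D E : EL N R} (h : tla D ⊆ tla E) :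
    E ∈ (canonicalInterp N R).sem D := by
  induction D generalizing E with
  | name A => exact h (List.mem_singleton_self _)
  | top => trivial
  | conj C D ihC ihD =>
      exact ⟨ihC fun a ha => h (List.mem_append_left _ ha),
        ihD fun a ha => h (List.mem_append_right _ ha)⟩
  | ex r C ih => exact ⟨C, h (List.mem_singleton_self _), ih (List.Subset.refl _)⟩

lemma subsume_of_mem_canonicalInterp_sem {D E : EL N R} (h : E ∈ (canonicalInterp N R).sem D) :
    Subsume E D := by
  induction D generalizing E with
  | name A => exact subsume_of_mem_tla h
  | top => exact fun _ _ _ => trivial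
  | conj C D ihC ihD => exact fun I _ hx => ⟨ihC h.1 I hx, ihD h.2 I hx⟩
  | ex r C ih =>
      obtain ⟨F, hF, hFC⟩ := h
      exact subsume_trans (subsume_of_mem_tla hF) (subsume_ex r (ih hFC))

lemma subsume_iff_mem_canonicalInterp_sem {C D : EL N R} :
    Subsume C D ↔ C ∈ (canonicalInterp N R).sem D :=
  ⟨fun h => h _ (mem_canonicalInterp_sem_of_tla_subset (List.Subset.refl _)),
    subsume_of_mem_canonicalInterp_sem⟩

lemma exists_mem_tla_subsume_of_subsume_atom {C D' : EL N R} (hD' : IsAtomEL D')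
    (h : Subsume C D') : ∃ C' ∈ tla C, Subsume C' D' := by
  rw [subsume_iff_mem_canonicalInterp_sem] at h
  cases D' with
  | name A => exact ⟨.name A, h, subsume_refl _⟩
  | ex r F =>
      obtain ⟨G, hG, hGF⟩ := h
      exact ⟨.ex r G, hG, subsume_ex r (subsume_of_mem_canonicalInterp_sem hGF)⟩
  | top | conj _ _ => exact hD'.elim

lemma subsume_iff_forall_tla_exists_tla {C D : EL N R} :
    Subsume C D ↔ ∀ D' ∈ tla D, ∃ C' ∈ tla C, Subsume C' D' := by
  refine ⟨fun h D' hD' => ?_, fun h => subsume_of_forall_tla fun D' hD' => ?_⟩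
  · exact exists_mem_tla_subsume_of_subsume_atom (isAtomEL_of_mem_tla hD')
      (subsume_trans h (subsume_of_mem_tla hD'))
  · obtain ⟨C', hC', hC'D'⟩ := h D' hD'
    exact subsume_trans (subsume_of_mem_tla hC') hC'D'

end EL

theorem stmt2 {N R : Type} (C D : EL N R) :
    ¬ Subsume C D ↔ ∃ D' ∈ tla D, ∀ C' ∈ tla C, ¬ Subsume C' D' := by
  rw [EL.subsume_iff_forall_tla_exists_tla]
  simp only [not_forall, not_exists, not_and, exists_prop]
end

section
/- For any role name r and EL concept terms C, D, if ∃r.C ⊑ ∃r.D then C ⊑ D. -/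
/-- Extend `I` with a fresh point `none` having a single `r`-edge to `some x`. -/
def extInterp {N R : Type} (I : Interp N R) (r : R) (x : I.dom) : Interp N R where
  dom := Option I.dom
  nonempty := ⟨none⟩
  cname A := {z | ∃ a, z = some a ∧ a ∈ I.cname A}
  role s := {p | (∃ a b, p = (some a, some b) ∧ (a, b) ∈ I.role s) ∨
    (s = r ∧ p = (none, some x))}

lemma extInterp_sem {N R : Type} (I : Interp N R) (r : R) (x : I.dom) :
    ∀ (E : EL N R) (a : I.dom),
      some a ∈ (extInterp I r x).sem E ↔ a ∈ I.sem E := by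
  intro E
  induction E with
  | name A =>
      intro a
      simp [Interp.sem, extInterp]
      exact ⟨fun ⟨b, hb, hmem⟩ => (Option.some.inj hb) ▸ hmem, fun h => ⟨a, rfl, h⟩⟩
  | top => intro a; simp [Interp.sem]; exact Set.mem_univ _
  | conj E F ihE ihF =>
      intro a
      simp [Interp.sem, ihE, ihF]
      exact Iff.intro (fun h => ⟨(ihE a).mp h.1, (ihF a).mp h.2⟩) (fun h => ⟨(ihE a).mpr h.1, (ihF a).mpr h.2⟩)
  | ex s E ih =>
      intro a
      constructor
      · rintro ⟨y, hrole, hy⟩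
        rcases hrole with ⟨a', b, heq, hab⟩ | ⟨_, heq⟩
        · obtain ⟨h1, h2⟩ := Prod.mk.injEq _ _ _ _ ▸ heq
          cases h1; cases h2
          exact ⟨b, hab, (ih b).mp hy⟩
        · exact absurd (congrArg Prod.fst heq) (by simp)
      · rintro ⟨y, hab, hy⟩
        exact ⟨some y, Or.inl ⟨a, y, rfl, hab⟩, (ih y).mpr hy⟩

theorem stmt6 {N R : Type} (C D : EL N R) (r : R) (h : Subsume (EL.ex r C) (EL.ex r D)) :
    Subsume C D := by
  intro I x hx
  have hnone : (none : Option I.dom) ∈ (extInterp I r x).sem (EL.ex r C) := by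
    exact ⟨some x, Or.inr ⟨rfl, rfl⟩, (extInterp_sem I r x C x).mpr hx⟩
  have := h (extInterp I r x) hnone
  rcases this with ⟨y, hrole, hy⟩
  rcases hrole with ⟨a, b, heq, _⟩ | ⟨_, heq⟩
  · exact absurd (congrArg Prod.fst heq) (by simp)
  · have : y = some x := congrArg Prod.snd heq
    subst this
    exact (extInterp_sem I r x D x).mp hy
end

section
/- If C₁ ⊓ ... ⊓ Cₙ ⋢ D for an atom D, then Cᵢ ⋢ D for all i ∈ {1,...,n}. Conversely, if Cᵢ ⋢ D for all i, then C₁ ⊓ ... ⊓ Cₙ ⋢ D. -/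
/-!
Structural subsumption via a canonical model. Interpret every concept term as an element of the
domain, with `E ∈ A` iff `A` is a top-level atom of `E`, and `(E, F) ∈ r` iff `∃r.F` is one. Then
every `E` lies in its own extension, and membership of `E` in the extension of `C` implies
`E ⊑ C`. Hence if a conjunction is subsumed by an atom `D`, one of its top-level atoms is subsumed
by `D`, and that atom is a top-level atom of some conjunct `Cᵢ`, which is then subsumed by `D`.
-/

section

variable {N R : Type}

theorem Subsume.trans {C D E : EL N R} (hCD : Subsume C D) (hDE : Subsume D E) : Subsume C E :=
  fun I _ hx => hDE I (hCD I hx)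

theorem Subsume.ex_mono {C D : EL N R} (r : R) (h : Subsume C D) :
    Subsume (.ex r C) (.ex r D) :=
  fun I _ ⟨y, hxy, hy⟩ => ⟨y, hxy, h I hy⟩

theorem subsume_of_mem_tla {E a : EL N R} (ha : a ∈ tla E) : Subsume E a := by
  induction E with
  | name A | ex r C =>
    rw [tla, List.mem_singleton] at ha
    exact ha ▸ Subsume.refl _
  | top => simp [tla] at ha
  | conj C D ihC ihD =>
    rcases List.mem_append.mp ha with hC | hD
    · exact fun I _ hx => ihC hC I hx.1
    · exact fun I _ hx => ihD hD I hx.2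

theorem tla_conjs (C : EL N R) (Cs : List (EL N R)) :
    tla (conjs C Cs) = (C :: Cs).flatMap tla := by
  induction Cs generalizing C with
  | nil => simp [conjs]
  | cons D Ds ih => simp [conjs, tla, ih]

theorem tla_conjList (Cs : List (EL N R)) : tla (conjList Cs) = Cs.flatMap tla := by
  cases Cs with
  | nil => rfl
  | cons C Cs => exact tla_conjs C Cs

theorem mem_sem_conjs {I : Interp N R} {x : I.dom} (C : EL N R) (Cs : List (EL N R)) :
    x ∈ I.sem (conjs C Cs) ↔ ∀ D ∈ C :: Cs, x ∈ I.sem D := by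
  induction Cs generalizing C with
  | nil => simp [conjs]
  | cons D Ds ih => simp [conjs, Interp.sem, ih]

theorem subsume_conjList_of_mem {Cs : List (EL N R)} {C : EL N R} (hC : C ∈ Cs) :
    Subsume (conjList Cs) C := by
  cases Cs with
  | nil => simp at hC
  | cons C₀ Cs => exact fun _ _ hx => (mem_sem_conjs C₀ Cs).mp hx C hC

variable (N R) in
def canonInterp : Interp N R where
  dom := EL N R
  nonempty := ⟨.top⟩
  cname A := {E | .name A ∈ tla E}
  role r := {p | .ex r p.2 ∈ tla p.1}

theorem mem_sem_canonInterp_of_tla_subset {C E : EL N R} (h : tla C ⊆ tla E) :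
    E ∈ (canonInterp N R).sem C := by
  induction C generalizing E with
  | name A => exact h (List.mem_singleton_self _)
  | top => trivial
  | conj C D ihC ihD =>
    exact ⟨ihC fun a ha => h (List.mem_append_left _ ha),
      ihD fun a ha => h (List.mem_append_right _ ha)⟩
  | ex r C ih => exact ⟨C, h (List.mem_singleton_self _), ih (List.Subset.refl _)⟩

theorem subsume_of_mem_sem_canonInterp {C E : EL N R} (h : E ∈ (canonInterp N R).sem C) :
    Subsume E C := by
  induction C generalizing E with
  | name A => exact subsume_of_mem_tla h
  | top => exact fun _ _ _ => trivial
  | conj C D ihC ihD => exact fun I _ hx => ⟨ihC h.1 I hx, ihD h.2 I hx⟩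
  | ex r C ih =>
    obtain ⟨F, hF, hFC⟩ := h
    exact (subsume_of_mem_tla hF).trans ((ih hFC).ex_mono r)

theorem exists_mem_tla_subsume_of_subsume_atom {E D : EL N R} (hD : IsAtomEL D)
    (h : Subsume E D) : ∃ a ∈ tla E, Subsume a D := by
  have hE : E ∈ (canonInterp N R).sem D :=
    h _ (mem_sem_canonInterp_of_tla_subset (List.Subset.refl _))
  cases D with
  | name A => exact ⟨.name A, hE, Subsume.refl _⟩
  | ex r D =>
    obtain ⟨F, hF, hFD⟩ := hE
    exact ⟨.ex r F, hF, (subsume_of_mem_sem_canonInterp hFD).ex_mono r⟩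
  | top | conj _ _ => exact hD.elim

end

theorem stmt9_general {N R : Type} (Cs : List (EL N R)) (D : EL N R)
    (hD : IsAtomEL D) :
    (¬ Subsume (conjList Cs) D → ∀ C ∈ Cs, ¬ Subsume C D) ∧
    ((∀ C ∈ Cs, ¬ Subsume C D) → ¬ Subsume (conjList Cs) D) := by
  refine ⟨fun h C hC hCD => h ((subsume_conjList_of_mem hC).trans hCD), fun h hsub => ?_⟩
  obtain ⟨a, ha, haD⟩ := exists_mem_tla_subsume_of_subsume_atom hD hsub
  obtain ⟨C, hC, haC⟩ := List.mem_flatMap.mp ((tla_conjList Cs) ▸ ha)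
  exact h C hC ((subsume_of_mem_tla haC).trans haD)

theorem stmt9 {N R : Type} (Cs : List (EL N R)) (D : EL N R)
    (hCs : ∀ C ∈ Cs, IsAtomEL C) (hD : IsAtomEL D) :
    (¬ Subsume (conjList Cs) D → ∀ C ∈ Cs, ¬ Subsume C D) ∧
    ((∀ C ∈ Cs, ¬ Subsume C D) → ¬ Subsume (conjList Cs) D) :=
  stmt9_general Cs D hD
end

section
/- Let the valuation τ satisfy the clauses [X>X] → ⊥ for all variables X, [X>Y] ∧ [Y>Z] → [X>Z] for all variables X,Y,Z, and [X ⊑ ∃r.Y] → [X>Y] for all variables X,Y and existential atoms ∃r.Y. Define the assignment S^τ by S^τ_X := {D non-variable atom | τ([X ⊑ D]) = 1}, and let >_{S^τ} be the transitive closure of {(X,Y) | Y occurs in an atom of S^τ_X}. Then >_{S^τ} is irreflexive. -/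
theorem Relation.not_transGen_self_of_le {α : Type*} {r s : α → α → Prop} (hrs : r ≤ s)
    (hs : ∀ a b c, s a b → s b c → s a c) (hirr : ∀ a, ¬ s a a) (a : α) :
    ¬ Relation.TransGen r a a := fun h =>
  hirr a (@Relation.transGen_eq_self _ s ⟨hs⟩ ▸ Relation.TransGen.mono hrs a a h)

theorem stmt16 {V K R : Type}
    (At : Set (EL (V ⊕ K) R))
    (τP : EL (V ⊕ K) R → EL (V ⊕ K) R → Bool) (τG : V → V → Bool)
    (h1 : ∀ X : V, τG X X = false)
    (h2 : ∀ X Y Z : V, τG X Y = true → τG Y Z = true → τG X Z = true)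
    (h3 : ∀ (X Y : V) (r : R), EL.ex r (EL.name (Sum.inl Y)) ∈ At →
      τP (EL.name (Sum.inl X)) (EL.ex r (EL.name (Sum.inl Y))) = true → τG X Y = true) :
    ∀ X : V, ¬ Relation.TransGen (fun X Y : V => ∃ r : R,
      EL.ex r (EL.name (Sum.inl Y)) ∈ At ∧
      τP (EL.name (Sum.inl X)) (EL.ex r (EL.name (Sum.inl Y))) = true) X X :=
  Relation.not_transGen_self_of_le (s := fun X Y => τG X Y = true)
    (fun X Y ⟨r, hAt, hτ⟩ => h3 X Y r hAt hτ) h2 (fun X h => Bool.false_ne_true (h1 X ▸ h))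
end
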